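/- Fix an integer t ≥ 1. For all integers i, j, ℓ ≥ 1 such that π_i, π_j, π_ℓ are pairwise distinct, LCS(π_i, π_j, π_ℓ) ≤ t². -/

import Mathlib

/-- Lexicographic "strictly smaller" for vectors in `Fin r → ℤ`. -/
def lexLt {r : ℕ} (x y : Fin r → ℤ) : Prop :=
  ∃ j : Fin r, (∀ i : Fin r, i < j → x i = y i) ∧ x j < y j

/-- The `u`-twisted order on the alphabet `[t]^r`: `a` weakly precedes `b` in `π(u)`
iff `a = b` or `(u₁a₁, …, u_r a_r)` is lexicographically smaller than
`(u₁b₁, …, u_r b_r)` (letters of `[t] = {1,…,t}` are represented by `Fin t`,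
with `a i : Fin t` standing for the letter `(a i : ℤ) + 1`). -/
def uLe {t r : ℕ} (u : Fin r → ℤ) (a b : Fin r → Fin t) : Prop :=
  a = b ∨ lexLt (fun i => u i * ((a i : ℤ) + 1)) (fun i => u i * ((b i : ℤ) + 1))

instance {t r : ℕ} (u : Fin r → ℤ) : DecidableRel (uLe (t := t) (r := r) u) := fun a b => by
  unfold uLe lexLt; infer_instance

/-- `piWord t r u = π(u)`: the word listing every element of the alphabet `[t]^r`
exactly once, in increasing `u`-twisted lexicographic order. -/
noncomputable def piWord (t r : ℕ) (u : Fin r → ℤ) : List (Fin r → Fin t) :=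
  (Finset.univ.toList (α := Fin r → Fin t)).mergeSort (fun a b => decide (uLe u a b))

/-- `LCS ws` is the length of a longest word that is a subsequence of every word in `ws`. -/
noncomputable def LCS {α : Type*} (ws : List (List α)) : ℕ :=
  sSup {L | ∃ x : List α, (∀ w ∈ ws, x.Sublist w) ∧ x.length = L}

/-- The eight sign vectors `u^{(1)}, …, u^{(8)}` (rows), with `+` as `1` and `-` as `-1`. -/
def uMat : Fin 8 → Fin 8 → ℤ :=
  ![![1, 1, 1, 1, 1, 1, 1, 1],
    ![-1, -1, -1, 1, -1, 1, -1, -1],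
    ![1, 1, 1, -1, -1, -1, -1, 1],
    ![-1, 1, -1, -1, 1, 1, 1, -1],
    ![1, -1, -1, 1, -1, -1, 1, 1],
    ![-1, 1, 1, 1, 1, -1, -1, -1],
    ![1, -1, -1, -1, 1, 1, -1, 1],
    ![-1, -1, 1, -1, -1, -1, 1, -1]]

/-- `uSeq i = u^{(i)}` for `i ≥ 1`: the periodic extension `u^{(i)} = u^{(i mod 8)}`,
with the representative of `i mod 8` taken in `{1,…,8}`. -/
def uSeq (i : ℕ) : Fin 8 → ℤ := uMat ⟨(i - 1) % 8, Nat.mod_lt _ (by norm_num)⟩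

/-- `piSeq t i = π_i = π(u^{(i)})`, a permutation of the alphabet `[t]^8`. -/
noncomputable def piSeq (t : ℕ) (i : ℕ) : List (Fin 8 → Fin t) := piWord t 8 (uSeq i)

/- ---------- auxiliary lemmas ---------- -/

lemma uMat_pm : ∀ p k, uMat p k = 1 ∨ uMat p k = -1 := by decide

lemma rows_fact : ∀ p q s : Fin 8, uMat p ≠ uMat q → uMat p ≠ uMat s → uMat q ≠ uMat s →
    ∃ k1 k2 : Fin 8, ∀ k, uMat p k = uMat q k → uMat p k = uMat s k → k = k1 ∨ k = k2 := by
  exact @of_decide_eq_true _ (@Nat.decidableForallFin _ _ fun p => @Nat.decidableForallFin _ _ fun q => @Nat.decidableForallFin _ _ fun s => @instDecidableForall _ _ (@instDecidableNot _ (Fintype.decidablePiFintype _ _)) inferInstance) (by decide +kernel)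

lemma lexLt_trans {r : ℕ} {x y z : Fin r → ℤ} (h1 : lexLt x y) (h2 : lexLt y z) :
    lexLt x z := by
  obtain ⟨j1, p1, l1⟩ := h1
  obtain ⟨j2, p2, l2⟩ := h2
  rcases lt_trichotomy j1 j2 with h | h | h
  · exact ⟨j1, fun i hi => (p1 i hi).trans (p2 i (hi.trans h)),
      lt_of_lt_of_le l1 (le_of_eq (p2 j1 h))⟩
  · subst h
    exact ⟨j1, fun i hi => (p1 i hi).trans (p2 i hi), l1.trans l2⟩
  · exact ⟨j2, fun i hi => (p1 i (hi.trans h)).trans (p2 i hi),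
      by rw [p1 j2 h]; exact l2⟩

lemma uLe_trans {t r : ℕ} (u : Fin r → ℤ) (a b c : Fin r → Fin t)
    (hab : uLe u a b) (hbc : uLe u b c) : uLe u a c := by
  rcases hab with rfl | hab
  · exact hbc
  rcases hbc with rfl | hbc
  · exact Or.inr hab
  · exact Or.inr (lexLt_trans hab hbc)

lemma uLe_total {t r : ℕ} (u : Fin r → ℤ) (hu : ∀ i, u i ≠ 0) (a b : Fin r → Fin t) :
    uLe u a b ∨ uLe u b a := by
  by_cases hab : a = b
  · exact Or.inl (Or.inl hab)
  · have hne : (Finset.univ.filter (fun i => a i ≠ b i)).Nonempty := by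
      by_contra h
      apply hab
      funext i
      by_contra hi
      exact h ⟨i, by simp [hi]⟩
    set j := (Finset.univ.filter (fun i => a i ≠ b i)).min' hne with hj
    have hjd : a j ≠ b j := by
      have := (Finset.univ.filter (fun i => a i ≠ b i)).min'_mem hne
      simpa using this
    have hpre : ∀ i, i < j → a i = b i := by
      intro i hi
      by_contra hne'
      have : j ≤ i := Finset.min'_le _ _ (by simp [hne'])
      exact absurd hi (not_lt.mpr this)
    have hcne : u j * ((a j : ℤ) + 1) ≠ u j * ((b j : ℤ) + 1) := by
      intro h
      have := mul_left_cancel₀ (hu j) h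
      apply hjd
      have : (a j : ℤ) = (b j : ℤ) := by linarith
      exact Fin.val_injective (by exact_mod_cast this)
    rcases lt_or_gt_of_ne hcne with h | h
    · exact Or.inl (Or.inr ⟨j, fun i hi => by simp only [hpre i hi], h⟩)
    · exact Or.inr (Or.inr ⟨j, fun i hi => by simp only [hpre i hi], h⟩)

/-- From `uLe u a b` with `a ≠ b` extract the first differing coordinate. -/
lemma firstdiff {t r : ℕ} {u : Fin r → ℤ} (hu : ∀ i, u i ≠ 0)
    {a b : Fin r → Fin t} (hab : a ≠ b) (h : uLe u a b) :
    ∃ j, (∀ i, i < j → a i = b i) ∧ u j * ((a j : ℤ) - (b j : ℤ)) < 0 := by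
  rcases h with h | ⟨j, hp, hl⟩
  · exact absurd h hab
  · simp only at hp hl
    refine ⟨j, fun i hi => ?_, ?_⟩
    · have := mul_left_cancel₀ (hu i) (hp i hi)
      have : (a i : ℤ) = (b i : ℤ) := by linarith
      exact Fin.val_injective (by exact_mod_cast this)
    · have : u j * ((a j : ℤ) - (b j : ℤ))
          = u j * ((a j : ℤ) + 1) - u j * ((b j : ℤ) + 1) := by ring
      rw [this]; linarith

lemma sign_eq {u v : ℤ} (hu : u = 1 ∨ u = -1) (hv : v = 1 ∨ v = -1) {c : ℤ}
    (h1 : u * c < 0) (h2 : v * c < 0) : u = v := by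
  rcases hu with rfl | rfl <;> rcases hv with rfl | rfl <;> [skip; skip; skip; skip] <;>
    first
      | rfl
      | (exfalso; simp only [one_mul, neg_mul, neg_neg, neg_lt, lt_neg] at h1 h2; linarith)

/-- Key lemma: if `a ≠ b` are comparable the same way in three twisted orders whose
sign vectors simultaneously agree only at `k1, k2`, then `a, b` differ at `k1` or `k2`. -/
lemma key {t r : ℕ} {u v w : Fin r → ℤ}
    (hu : ∀ i, u i = 1 ∨ u i = -1) (hv : ∀ i, v i = 1 ∨ v i = -1)
    (hw : ∀ i, w i = 1 ∨ w i = -1)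
    {k1 k2 : Fin r} (hS : ∀ k, u k = v k → u k = w k → k = k1 ∨ k = k2)
    {a b : Fin r → Fin t} (hab : a ≠ b)
    (h1 : uLe u a b) (h2 : uLe v a b) (h3 : uLe w a b) :
    (a k1, a k2) ≠ (b k1, b k2) := by
  have hu0 : ∀ i, u i ≠ 0 := fun i => by rcases hu i with h | h <;> simp [h]
  have hv0 : ∀ i, v i ≠ 0 := fun i => by rcases hv i with h | h <;> simp [h]
  have hw0 : ∀ i, w i ≠ 0 := fun i => by rcases hw i with h | h <;> simp [h]
  obtain ⟨j1, p1, l1⟩ := firstdiff hu0 hab h1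
  obtain ⟨j2, p2, l2⟩ := firstdiff hv0 hab h2
  obtain ⟨j3, p3, l3⟩ := firstdiff hw0 hab h3
  have e12 : j1 = j2 := by
    rcases lt_trichotomy j1 j2 with h | h | h
    · rw [p2 j1 h] at l1; simp at l1
    · exact h
    · rw [p1 j2 h] at l2; simp at l2
  have e13 : j1 = j3 := by
    rcases lt_trichotomy j1 j3 with h | h | h
    · rw [p3 j1 h] at l1; simp at l1
    · exact h
    · rw [p1 j3 h] at l3; simp at l3
  subst e12; subst e13
  have huv : u j1 = v j1 := sign_eq (hu j1) (hv j1) l1 l2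
  have huw : u j1 = w j1 := sign_eq (hu j1) (hw j1) l1 l3
  have hja : a j1 ≠ b j1 := by
    intro h
    rw [h] at l1
    simp at l1
  intro hEq
  rcases hS j1 huv huw with rfl | rfl
  · exact hja (congrArg Prod.fst hEq)
  · exact hja (congrArg Prod.snd hEq)

lemma piWord_pairwise {t r : ℕ} (u : Fin r → ℤ) (hu : ∀ i, u i ≠ 0) :
    (piWord t r u).Pairwise (uLe u) := by
  have h := List.pairwise_mergeSort (le := fun a b => decide (uLe u a b))
    (fun a b c hab hbc =>
      decide_eq_true (uLe_trans u a b c (of_decide_eq_true hab) (of_decide_eq_true hbc)))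
    (fun a b => by
      rcases uLe_total u hu a b with h | h
      · simp [decide_eq_true h]
      · simp [decide_eq_true h])
    (Finset.univ.toList (α := Fin r → Fin t))
  exact h.imp (fun h => of_decide_eq_true h)

lemma piWord_nodup {t r : ℕ} (u : Fin r → ℤ) : (piWord t r u).Nodup :=
  ((List.mergeSort_perm _ _).nodup_iff).mpr (Finset.nodup_toList _)

/-- For `t ≥ 1` and all `i, j, ℓ ≥ 1` such that `π_i, π_j, π_ℓ` are pairwise distinct,
`LCS(π_i, π_j, π_ℓ) ≤ t²`. -/
theorem stmt17 (t : ℕ) (ht : 1 ≤ t) (i j l : ℕ) (hi : 1 ≤ i) (hj : 1 ≤ j) (hl : 1 ≤ l)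
    (hij : piSeq t i ≠ piSeq t j) (hil : piSeq t i ≠ piSeq t l)
    (hjl : piSeq t j ≠ piSeq t l) :
    LCS [piSeq t i, piSeq t j, piSeq t l] ≤ t ^ 2 := by
  classical
  have hUij : uSeq i ≠ uSeq j := fun h => hij (congrArg (piWord t 8) h)
  have hUil : uSeq i ≠ uSeq l := fun h => hil (congrArg (piWord t 8) h)
  have hUjl : uSeq j ≠ uSeq l := fun h => hjl (congrArg (piWord t 8) h)
  obtain ⟨k1, k2, hS⟩ := rows_fact ⟨(i - 1) % 8, Nat.mod_lt _ (by norm_num)⟩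
    ⟨(j - 1) % 8, Nat.mod_lt _ (by norm_num)⟩ ⟨(l - 1) % 8, Nat.mod_lt _ (by norm_num)⟩
    hUij hUil hUjl
  have hS' : ∀ k, uSeq i k = uSeq j k → uSeq i k = uSeq l k → k = k1 ∨ k = k2 := hS
  have hpm : ∀ (m : ℕ) (k : Fin 8), uSeq m k = 1 ∨ uSeq m k = -1 := fun m k => uMat_pm _ k
  have h0 : ∀ (m : ℕ) (k : Fin 8), uSeq m k ≠ 0 := fun m k => by
    rcases hpm m k with h | h <;> simp [h]
  unfold LCS
  apply csSup_le
  · exact ⟨0, [], by simp, rfl⟩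
  rintro L ⟨x, hx, rfl⟩
  have hxi : x.Sublist (piSeq t i) := hx _ (by simp)
  have hxj : x.Sublist (piSeq t j) := hx _ (by simp)
  have hxl : x.Sublist (piSeq t l) := hx _ (by simp)
  have Pi : x.Pairwise (uLe (uSeq i)) := (piWord_pairwise _ (h0 i)).sublist hxi
  have Pj : x.Pairwise (uLe (uSeq j)) := (piWord_pairwise _ (h0 j)).sublist hxj
  have Pl : x.Pairwise (uLe (uSeq l)) := (piWord_pairwise _ (h0 l)).sublist hxl
  have hnd : x.Pairwise (· ≠ ·) := (piWord_nodup (uSeq i)).sublist hxi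
  have hP : x.Pairwise (fun a b => (a k1, a k2) ≠ (b k1, b k2)) := by
    have hall := (Pi.and Pj).and (Pl.and hnd)
    exact hall.imp (fun h =>
      key (hpm i) (hpm j) (hpm l) hS' h.2.2 h.1.1 h.1.2 h.2.1)
  have hmap : (x.map (fun a => (a k1, a k2))).Nodup :=
    hP.map _ (fun _ _ h => h)
  calc x.length = (x.map (fun a => (a k1, a k2))).length := (List.length_map _).symm
    _ ≤ Fintype.card (Fin t × Fin t) := hmap.length_le_card
    _ = t ^ 2 := by simp [Fintype.card_prod, sq]
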